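/- Assume 0 < |⟦γ⟧| < σ and set a = |⟦γ⟧|/σ and z_a = arcsin(a). Let C ∈ (1,∞) be the unique constant with √(σ/(2g)) ∫₀^{z_a} cos(ψ)·(C − cos(ψ))^{−1/2} dψ = ℓ, and define Ξ : [−z_a, z_a] → ℝ by Ξ(z) = √(σ/(2g)) ∫₀^{z} cos(ψ)·(C − cos(ψ))^{−1/2} dψ. Then Ξ is odd, strictly increasing, and a bijection from [−z_a, z_a] onto [−ℓ, ℓ], and the function χ : [−ℓ,ℓ] → ℝ defined by χ(x) = sgn(⟦γ⟧)·√(2σ/g)·√(C − cos(Ξ^{−1}(x))) is infinitely differentiable on [−ℓ,ℓ], is an even function, and is the unique twice continuously differentiable solution of the equilibrium capillary problem with pressure P = 0, i.e. g·χ − σ·𝓗(χ) = 0 on (−ℓ,ℓ) and χ'(±ℓ)/√(1+χ'(±ℓ)²) = ±⟦γ⟧/σ. -/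

import Mathlib

/-!
Parametrize the meniscus by its inclination angle `ψ ∈ [-z_a, z_a]`: abscissa `Ξ(ψ)` and height
`c √(C - cos ψ)`, `c = sgn⟦γ⟧ √(2σ/g)`. As `Ξ' > 0` on `(-π/2, π/2)`, `Ξ` is a smooth
diffeomorphism there, and along the curve `dχ/dx = (c sin ψ / (2√(C - cos ψ))) / Ξ'(ψ) =
sgn⟦γ⟧ tan ψ`. Hence `χ'/√(1 + χ'²) = sgn⟦γ⟧ sin ψ`, whose `x`-derivative is `g χ / σ`, and
`ψ = ±z_a` gives the contact angle conditions.

Uniqueness: for two solutions `ζ, η` with fluxes `F_ζ = σ ζ'/√(1 + ζ'²)`, the function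
`(F_ζ - F_η)(ζ - η)` vanishes at `±ℓ` and has derivative `g (ζ - η)² + (F_ζ - F_η)(ζ' - η')`,
which is nonnegative because `t ↦ t/√(1 + t²)` is increasing. Its integral is zero, so `ζ = η`.
-/

open Set MeasureTheory

/-- One-sided derivative of a function regarded as a function on `[-ℓ, ℓ]`. -/
noncomputable def capD (ℓ : ℝ) (ζ : ℝ → ℝ) : ℝ → ℝ :=
  derivWithin ζ (Set.Icc (-ℓ) ℓ)

/-- The mean curvature operator `𝓗(ζ) = (ζ'/√(1+(ζ')²))'` on `[-ℓ, ℓ]`. -/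
noncomputable def meanCurv (ℓ : ℝ) (ζ : ℝ → ℝ) : ℝ → ℝ :=
  derivWithin (fun x => capD ℓ ζ x / Real.sqrt (1 + (capD ℓ ζ x) ^ 2)) (Set.Icc (-ℓ) ℓ)

/-- `ζ` is a twice continuously differentiable solution of the equilibrium capillary
problem on `[-ℓ, ℓ]` with pressure `P`. -/
def IsCapSol (g σ ℓ γ P : ℝ) (ζ : ℝ → ℝ) : Prop :=
  ContDiffOn ℝ 2 ζ (Set.Icc (-ℓ) ℓ) ∧
  (∀ x ∈ Set.Ioo (-ℓ) ℓ, g * ζ x - σ * meanCurv ℓ ζ x = P) ∧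
  σ * capD ℓ ζ ℓ / Real.sqrt (1 + (capD ℓ ζ ℓ) ^ 2) = γ ∧
  σ * capD ℓ ζ (-ℓ) / Real.sqrt (1 + (capD ℓ ζ (-ℓ)) ^ 2) = -γ

/-- The capillary energy functional `𝓘`, expressed in terms of a function `ζ`
and its derivative `ζ'`. -/
noncomputable def capEnergy (g σ ℓ γ : ℝ) (ζ ζ' : ℝ → ℝ) : ℝ :=
  (∫ x in (-ℓ)..ℓ, (g / 2 * ζ x ^ 2 + σ * Real.sqrt (1 + ζ' x ^ 2))) -
    γ * (ζ ℓ + ζ (-ℓ))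

/-- `ψ ∈ W^{1,1}((-ℓ,ℓ))` with weak derivative `ψ'`. -/
def IsW11 (ℓ : ℝ) (ψ ψ' : ℝ → ℝ) : Prop :=
  MeasureTheory.IntegrableOn ψ' (Set.Ioo (-ℓ) ℓ) ∧
  ∀ x ∈ Set.Icc (-ℓ) ℓ, ψ x = ψ (-ℓ) + ∫ t in (-ℓ)..x, ψ' t

open Filter Function Real Topology
open scoped ContDiff

section InverseFunction

variable {f : ℝ → ℝ} {n : WithTop ℕ∞} {s U : Set ℝ} {x : ℝ}

theorem exists_contDiffAt_eventuallyEq_invFunOn (hf : ContDiff ℝ n f) (hn : n ≠ 0)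
    (hU : IsOpen U) (hsU : s ⊆ U) (hinj : InjOn f U) (hx : x ∈ f '' s)
    (hd : deriv f (invFunOn f s x) ≠ 0) :
    ∃ L : ℝ → ℝ, ContDiffAt ℝ n L x ∧ HasDerivAt L (deriv f (invFunOn f s x))⁻¹ x ∧
      invFunOn f s =ᶠ[𝓝[f '' s] x] L := by
  obtain ⟨hzs, hzx⟩ : invFunOn f s x ∈ s ∧ f (invFunOn f s x) = x :=
    ⟨invFunOn_mem hx, invFunOn_eq hx⟩
  set z := invFunOn f s x
  have hfd : HasDerivAt f (deriv f z) z := (hf.differentiable hn z).hasDerivAt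
  have hfe := hfd.hasFDerivAt_equiv hd
  have hfz : ContDiffAt ℝ n f z := hf.contDiffAt
  have hLz : hfz.localInverse hfe hn (f z) = z := hfz.localInverse_apply_image hfe hn
  have hright : ∀ᶠ y in 𝓝 (f z), f (hfz.localInverse hfe hn y) = y :=
    (hfz.hasStrictFDerivAt' hfe hn).eventually_right_inverse
  have hL := hfz.to_localInverse hfe hn
  rw [hzx] at hLz hright hL
  refine ⟨_, hL, .of_local_left_inverse hL.continuousAt (by rwa [hLz]) hd hright, ?_⟩
  have hLU : ∀ᶠ y in 𝓝 x, hfz.localInverse hfe hn y ∈ U :=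
    hL.continuousAt.eventually_mem (hU.mem_nhds (by rw [hLz]; exact hsU hzs))
  filter_upwards [nhdsWithin_le_nhds (hLU.and hright), self_mem_nhdsWithin] with y hy hys
  exact hinj (hsU (invFunOn_mem hys)) hy.1 ((invFunOn_eq hys).trans hy.2.symm)

theorem contDiffOn_invFunOn (hf : ContDiff ℝ n f) (hn : n ≠ 0) (hU : IsOpen U) (hsU : s ⊆ U)
    (hinj : InjOn f U) (hd : ∀ z ∈ s, deriv f z ≠ 0) :
    ContDiffOn ℝ n (invFunOn f s) (f '' s) := fun _ hx =>
  let ⟨_, hL, _, hfL⟩ :=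
    exists_contDiffAt_eventuallyEq_invFunOn hf hn hU hsU hinj hx (hd _ (invFunOn_mem hx))
  hL.contDiffWithinAt.congr_of_eventuallyEq hfL (hfL.self_of_nhdsWithin hx)

theorem hasDerivWithinAt_invFunOn (hf : ContDiff ℝ n f) (hn : n ≠ 0) (hU : IsOpen U)
    (hsU : s ⊆ U) (hinj : InjOn f U) (hx : x ∈ f '' s) (hd : deriv f (invFunOn f s x) ≠ 0) :
    HasDerivWithinAt (invFunOn f s) (deriv f (invFunOn f s x))⁻¹ (f '' s) x :=
  let ⟨_, _, hL, hfL⟩ := exists_contDiffAt_eventuallyEq_invFunOn hf hn hU hsU hinj hx hd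
  hL.hasDerivWithinAt.congr_of_eventuallyEq hfL (hfL.self_of_nhdsWithin hx)

theorem invFunOn_neg (hodd : ∀ z, f (-z) = -f z) (hs : ∀ z ∈ s, -z ∈ s) (hinj : InjOn f s)
    (hx : x ∈ f '' s) : invFunOn f s (-x) = -invFunOn f s x :=
  calc invFunOn f s (-x) = invFunOn f s (f (-invFunOn f s x)) := by rw [hodd, invFunOn_eq hx]
    _ = -invFunOn f s x := hinj.leftInvOn_invFunOn (hs _ (invFunOn_mem hx))

end InverseFunction

theorem StrictMonoOn.bijOn_Icc {α δ : Type*} [ConditionallyCompleteLinearOrder α]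
    [TopologicalSpace α] [OrderTopology α] [DenselyOrdered α] [LinearOrder δ]
    [TopologicalSpace δ] [OrderClosedTopology δ] {f : α → δ} {a b : α} (hab : a ≤ b)
    (hf : StrictMonoOn f (Icc a b)) (hc : ContinuousOn f (Icc a b)) :
    BijOn f (Icc a b) (Icc (f a) (f b)) :=
  ⟨hf.monotoneOn.mapsTo_Icc, hf.injOn, hc.surjOn_Icc (left_mem_Icc.2 hab) (right_mem_Icc.2 hab)⟩

theorem contDiff_primitive {h : ℝ → ℝ} (hh : ContDiff ℝ ∞ h) (a : ℝ) :
    ContDiff ℝ ∞ (fun z => ∫ x in a..z, h x) := by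
  have hderiv : deriv (fun z => ∫ x in a..z, h x) = h :=
    funext (hh.continuous.deriv_integral _ a)
  exact contDiff_infty_iff_deriv.2
    ⟨fun z => (hh.continuous.integral_hasStrictDerivAt a z).hasDerivAt.differentiableAt,
      by rwa [hderiv]⟩

theorem primitive_neg_of_even {h : ℝ → ℝ} (he : ∀ x, h (-x) = h x) (z : ℝ) :
    ∫ x in (0 : ℝ)..(-z), h x = -∫ x in (0 : ℝ)..z, h x := by
  have h_neg := intervalIntegral.integral_comp_neg (a := 0) (b := -z) h
  simp only [he, neg_neg, neg_zero] at h_neg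
  rw [h_neg, intervalIntegral.integral_symm]

theorem ContDiffOn.hasDerivAt_derivWithin {f : ℝ → ℝ} {n : WithTop ℕ∞} {a b x : ℝ}
    (hf : ContDiffOn ℝ n f (Icc a b)) (hn : n ≠ 0) (hx : x ∈ Ioo a b) :
    HasDerivAt f (derivWithin f (Icc a b) x) x := by
  have hnhds : Icc a b ∈ 𝓝 x := Icc_mem_nhds hx.1 hx.2
  rw [derivWithin_of_mem_nhds hnhds]
  exact ((hf.differentiableOn hn x (Ioo_subset_Icc_self hx)).differentiableAt hnhds).hasDerivAt

theorem Monotone.sub_mul_sub_nonneg {α : Type*} [Ring α] [LinearOrder α] [IsOrderedRing α]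
    {f : α → α} (hf : Monotone f) (a b : α) : 0 ≤ (f a - f b) * (a - b) := by
  rcases le_total a b with h | h
  · exact mul_nonneg_of_nonpos_of_nonpos (sub_nonpos.2 (hf h)) (sub_nonpos.2 h)
  · exact mul_nonneg (sub_nonneg.2 (hf h)) (sub_nonneg.2 h)

theorem strictMono_div_sqrt_one_add_sq : StrictMono (fun t : ℝ => t / √(1 + t ^ 2)) := by
  simpa only [sin_arctan] using sin_arctan_strictMono

theorem contDiff_div_sqrt_one_add_sq {n : WithTop ℕ∞} :
    ContDiff ℝ n (fun t : ℝ => t / √(1 + t ^ 2)) :=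
  contDiff_id.div ((contDiff_const.add (contDiff_id.pow 2)).sqrt fun t => by positivity)
    fun t => by positivity

theorem mul_tan_div_sqrt_one_add_sq {z s : ℝ} (hz : 0 < cos z) (hs : s ^ 2 = 1) :
    s * tan z / √(1 + (s * tan z) ^ 2) = s * sin z := by
  have h1 : 1 + (s * tan z) ^ 2 = (1 / cos z) ^ 2 := by
    rw [mul_pow, hs, one_mul, tan_eq_sin_div_cos, div_pow, div_pow, one_pow]
    field_simp
    exact cos_sq_add_sin_sq z
  rw [h1, sqrt_sq (by positivity), tan_eq_sin_div_cos]
  field_simp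

theorem Real.sign_sq_of_ne_zero {r : ℝ} (hr : r ≠ 0) : sign r ^ 2 = 1 := by
  rcases sign_apply_eq_of_ne_zero r hr with h | h <;> simp [h]

theorem Real.sign_mul_abs (r : ℝ) : sign r * |r| = r := by
  rcases lt_trichotomy r 0 with h | h | h <;>
    simp [sign_of_neg, sign_of_pos, abs_of_neg, abs_of_pos, h]

section Profile

variable {k C c : ℝ} {n : WithTop ℕ∞}

theorem sub_cos_pos (hC : 1 < C) (z : ℝ) : 0 < C - cos z := by
  linarith [cos_le_one z]

theorem contDiff_sqrt_sub_cos (hC : 1 < C) : ContDiff ℝ n (fun z => √(C - cos z)) :=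
  (contDiff_const.sub contDiff_cos).sqrt fun z => (sub_cos_pos hC z).ne'

theorem contDiff_cos_div_sqrt_sub_cos (hC : 1 < C) :
    ContDiff ℝ n (fun z => cos z / √(C - cos z)) :=
  contDiff_cos.div (contDiff_sqrt_sub_cos hC) fun z => (sqrt_pos.2 (sub_cos_pos hC z)).ne'

/-- `Ξ`, with `k = √(σ/(2g))`. -/
noncomputable def capAbscissa (k C z : ℝ) : ℝ :=
  k * ∫ ψ in (0 : ℝ)..z, cos ψ / √(C - cos ψ)

noncomputable def capHeight (c C w : ℝ) : ℝ :=
  c * √(C - cos w)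

theorem hasDerivAt_capAbscissa (hC : 1 < C) (z : ℝ) :
    HasDerivAt (capAbscissa k C) (k * (cos z / √(C - cos z))) z :=
  ((contDiff_cos_div_sqrt_sub_cos (n := 0) hC).continuous.integral_hasStrictDerivAt 0 z).hasDerivAt
    |>.const_mul k

theorem contDiff_capAbscissa (hC : 1 < C) : ContDiff ℝ ∞ (capAbscissa k C) :=
  contDiff_const.mul (contDiff_primitive (contDiff_cos_div_sqrt_sub_cos hC) 0)

theorem capAbscissa_neg (z : ℝ) : capAbscissa k C (-z) = -capAbscissa k C z := by
  rw [capAbscissa, capAbscissa, primitive_neg_of_even (fun ψ => by rw [cos_neg]), mul_neg]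

theorem deriv_capAbscissa_pos (hk : 0 < k) (hC : 1 < C) {z : ℝ}
    (hz : z ∈ Ioo (-(π / 2)) (π / 2)) : 0 < deriv (capAbscissa k C) z := by
  rw [(hasDerivAt_capAbscissa hC z).deriv]
  exact mul_pos hk (div_pos (cos_pos_of_mem_Ioo hz) (sqrt_pos.2 (sub_cos_pos hC z)))

theorem strictMonoOn_capAbscissa (hk : 0 < k) (hC : 1 < C) :
    StrictMonoOn (capAbscissa k C) (Ioo (-(π / 2)) (π / 2)) :=
  strictMonoOn_of_deriv_pos (convex_Ioo _ _) (contDiff_capAbscissa hC).continuous.continuousOn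
    fun z hz => deriv_capAbscissa_pos hk hC (by rwa [interior_Ioo] at hz)

theorem Icc_subset_Ioo_pi_div_two {za : ℝ} (hza : za < π / 2) :
    Icc (-za) za ⊆ Ioo (-(π / 2)) (π / 2) :=
  Icc_subset_Ioo (neg_lt_neg hza) hza

theorem bijOn_capAbscissa (hk : 0 < k) (hC : 1 < C) {za : ℝ} (hza : za ∈ Ioo 0 (π / 2)) :
    BijOn (capAbscissa k C) (Icc (-za) za)
      (Icc (-capAbscissa k C za) (capAbscissa k C za)) := by
  rw [← capAbscissa_neg]
  exact ((strictMonoOn_capAbscissa hk hC).mono (Icc_subset_Ioo_pi_div_two hza.2)).bijOn_Icc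
    (by linarith [hza.1]) (contDiff_capAbscissa hC).continuous.continuousOn

theorem hasDerivAt_capHeight (hC : 1 < C) (w : ℝ) :
    HasDerivAt (capHeight c C) (c * (sin w / (2 * √(C - cos w)))) w := by
  have h := ((hasDerivAt_sqrt (sub_cos_pos hC w).ne').comp w
    ((hasDerivAt_cos w).const_sub C)).const_mul c
  exact h.congr_deriv (by ring)

theorem contDiff_capHeight (hC : 1 < C) : ContDiff ℝ n (capHeight c C) :=
  contDiff_const.mul (contDiff_sqrt_sub_cos hC)

theorem capHeight_neg (w : ℝ) : capHeight c C (-w) = capHeight c C w := by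
  rw [capHeight, capHeight, cos_neg]

end Profile

/-- `Ξ⁻¹`. -/
noncomputable def capAngle (k C za : ℝ) : ℝ → ℝ :=
  invFunOn (capAbscissa k C) (Icc (-za) za)

section Meniscus

variable {k C za ℓ s x : ℝ}

theorem capAbscissa_pos (hk : 0 < k) (hC : 1 < C) (hza : za ∈ Ioo 0 (π / 2)) :
    0 < capAbscissa k C za := by
  have h0 : capAbscissa k C 0 = 0 := by simp [capAbscissa]
  have hza' : za ∈ Ioo (-(π / 2)) (π / 2) := ⟨by linarith [hza.1, pi_pos], hza.2⟩
  exact h0 ▸ strictMonoOn_capAbscissa hk hC ⟨by linarith [pi_pos], by linarith [pi_pos]⟩ hza'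
    hza.1

theorem image_capAbscissa_Icc (hk : 0 < k) (hC : 1 < C) (hza : za ∈ Ioo 0 (π / 2))
    (hℓ : capAbscissa k C za = ℓ) : capAbscissa k C '' Icc (-za) za = Icc (-ℓ) ℓ :=
  hℓ ▸ (bijOn_capAbscissa hk hC hza).image_eq

theorem cos_capAngle_pos (hk : 0 < k) (hC : 1 < C) (hza : za ∈ Ioo 0 (π / 2))
    (hℓ : capAbscissa k C za = ℓ) (hx : x ∈ Icc (-ℓ) ℓ) : 0 < cos (capAngle k C za x) := by
  rw [← image_capAbscissa_Icc hk hC hza hℓ] at hx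
  exact cos_pos_of_mem_Ioo (Icc_subset_Ioo_pi_div_two hza.2 (invFunOn_mem hx))

theorem capAngle_capAbscissa (hk : 0 < k) (hC : 1 < C) (hza : za ∈ Ioo 0 (π / 2)) {z : ℝ}
    (hz : z ∈ Icc (-za) za) : capAngle k C za (capAbscissa k C z) = z :=
  (bijOn_capAbscissa hk hC hza).injOn.leftInvOn_invFunOn hz

theorem capAngle_neg (hk : 0 < k) (hC : 1 < C) (hza : za ∈ Ioo 0 (π / 2))
    (hℓ : capAbscissa k C za = ℓ) (hx : x ∈ Icc (-ℓ) ℓ) :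
    capAngle k C za (-x) = -capAngle k C za x := by
  rw [← image_capAbscissa_Icc hk hC hza hℓ] at hx
  exact invFunOn_neg capAbscissa_neg (fun z hz => ⟨neg_le_neg hz.2, by linarith [hz.1]⟩)
    (bijOn_capAbscissa hk hC hza).injOn hx

theorem contDiffOn_capAngle (hk : 0 < k) (hC : 1 < C) (hza : za ∈ Ioo 0 (π / 2))
    (hℓ : capAbscissa k C za = ℓ) : ContDiffOn ℝ ∞ (capAngle k C za) (Icc (-ℓ) ℓ) := by
  rw [← image_capAbscissa_Icc hk hC hza hℓ]
  exact contDiffOn_invFunOn (contDiff_capAbscissa hC) (by simp) isOpen_Ioo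
    (Icc_subset_Ioo_pi_div_two hza.2) (strictMonoOn_capAbscissa hk hC).injOn
    fun z hz => (deriv_capAbscissa_pos hk hC (Icc_subset_Ioo_pi_div_two hza.2 hz)).ne'

theorem hasDerivWithinAt_capAngle (hk : 0 < k) (hC : 1 < C) (hza : za ∈ Ioo 0 (π / 2))
    (hℓ : capAbscissa k C za = ℓ) (hx : x ∈ Icc (-ℓ) ℓ) :
    HasDerivWithinAt (capAngle k C za)
      (√(C - cos (capAngle k C za x)) / (k * cos (capAngle k C za x))) (Icc (-ℓ) ℓ) x := by
  rw [← image_capAbscissa_Icc hk hC hza hℓ] at hx ⊢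
  have hz := Icc_subset_Ioo_pi_div_two hza.2 (invFunOn_mem hx)
  have h := hasDerivWithinAt_invFunOn (contDiff_capAbscissa hC) (by simp) isOpen_Ioo
    (Icc_subset_Ioo_pi_div_two hza.2) (strictMonoOn_capAbscissa hk hC).injOn hx
    (deriv_capAbscissa_pos hk hC hz).ne'
  rwa [(hasDerivAt_capAbscissa hC _).deriv, ← mul_div_assoc, inv_div] at h

theorem capD_capHeight_comp_capAngle (hk : 0 < k) (hC : 1 < C) (hza : za ∈ Ioo 0 (π / 2))
    (hℓ : capAbscissa k C za = ℓ) (hx : x ∈ Icc (-ℓ) ℓ) :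
    capD ℓ (capHeight (2 * k * s) C ∘ capAngle k C za) x = s * tan (capAngle k C za x) := by
  have hℓ0 : 0 < ℓ := hℓ ▸ capAbscissa_pos hk hC hza
  have h := (hasDerivAt_capHeight (c := 2 * k * s) hC _).comp_hasDerivWithinAt x
    (hasDerivWithinAt_capAngle hk hC hza hℓ hx)
  have hcos := cos_capAngle_pos hk hC hza hℓ hx
  have hsqrt := sqrt_pos.2 (sub_cos_pos hC (capAngle k C za x))
  rw [capD, h.derivWithin (uniqueDiffOn_Icc (by linarith) x hx), tan_eq_sin_div_cos]
  field_simp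

theorem capD_div_sqrt_capHeight_comp_capAngle (hk : 0 < k) (hC : 1 < C)
    (hza : za ∈ Ioo 0 (π / 2)) (hℓ : capAbscissa k C za = ℓ) (hs : s ^ 2 = 1)
    (hx : x ∈ Icc (-ℓ) ℓ) :
    capD ℓ (capHeight (2 * k * s) C ∘ capAngle k C za) x /
      √(1 + capD ℓ (capHeight (2 * k * s) C ∘ capAngle k C za) x ^ 2) =
      s * sin (capAngle k C za x) := by
  rw [capD_capHeight_comp_capAngle hk hC hza hℓ hx]
  exact mul_tan_div_sqrt_one_add_sq (cos_capAngle_pos hk hC hza hℓ hx) hs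

theorem meanCurv_capHeight_comp_capAngle (hk : 0 < k) (hC : 1 < C) (hza : za ∈ Ioo 0 (π / 2))
    (hℓ : capAbscissa k C za = ℓ) (hs : s ^ 2 = 1) (hx : x ∈ Icc (-ℓ) ℓ) :
    meanCurv ℓ (capHeight (2 * k * s) C ∘ capAngle k C za) x =
      s * √(C - cos (capAngle k C za x)) / k := by
  have hℓ0 : 0 < ℓ := hℓ ▸ capAbscissa_pos hk hC hza
  have h := ((hasDerivWithinAt_capAngle hk hC hza hℓ hx).sin).const_mul s
  have hflux := fun y => capD_div_sqrt_capHeight_comp_capAngle (x := y) hk hC hza hℓ hs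
  have hcos := cos_capAngle_pos hk hC hza hℓ hx
  rw [meanCurv, derivWithin_congr hflux (hflux x hx),
    h.derivWithin (uniqueDiffOn_Icc (by linarith) x hx)]
  field_simp

theorem isCapSol_capHeight_comp_capAngle {g σ γ : ℝ} (hk : 0 < k) (hC : 1 < C)
    (hza : za ∈ Ioo 0 (π / 2)) (hℓ : capAbscissa k C za = ℓ) (hs : s ^ 2 = 1)
    (hgk : 2 * g * k ^ 2 = σ) (hγ : σ * s * sin za = γ) :
    IsCapSol g σ ℓ γ 0 (capHeight (2 * k * s) C ∘ capAngle k C za) := by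
  have hza0 : 0 ≤ za := hza.1.le
  have hright : capAngle k C za ℓ = za :=
    hℓ ▸ capAngle_capAbscissa hk hC hza (right_mem_Icc.2 (by linarith))
  have hleft : capAngle k C za (-ℓ) = -za := by
    rw [← hℓ, ← capAbscissa_neg]
    exact capAngle_capAbscissa hk hC hza (left_mem_Icc.2 (by linarith))
  have hℓ0 : 0 < ℓ := hℓ ▸ capAbscissa_pos hk hC hza
  refine ⟨((contDiff_capHeight hC).comp_contDiffOn (contDiffOn_capAngle hk hC hza hℓ)).of_le
    (by norm_cast), fun x hx => ?_, ?_, ?_⟩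
  · rw [meanCurv_capHeight_comp_capAngle hk hC hza hℓ hs (Ioo_subset_Icc_self hx), comp_apply,
      capHeight, ← hgk]
    field_simp
    ring
  · rw [mul_div_assoc, capD_div_sqrt_capHeight_comp_capAngle hk hC hza hℓ hs
      (right_mem_Icc.2 (by linarith)), hright, ← hγ]
    ring
  · rw [mul_div_assoc, capD_div_sqrt_capHeight_comp_capAngle hk hC hza hℓ hs
      (left_mem_Icc.2 (by linarith)), hleft, sin_neg, ← hγ]
    ring

end Meniscus

noncomputable def capFlux (σ ℓ : ℝ) (ζ : ℝ → ℝ) (x : ℝ) : ℝ :=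
  σ * (capD ℓ ζ x / √(1 + capD ℓ ζ x ^ 2))

namespace IsCapSol

variable {g σ ℓ γ P x : ℝ} {ζ η : ℝ → ℝ}

theorem contDiffOn_capD (h : IsCapSol g σ ℓ γ P ζ) (hℓ : 0 < ℓ) :
    ContDiffOn ℝ 1 (capD ℓ ζ) (Icc (-ℓ) ℓ) :=
  h.1.derivWithin (uniqueDiffOn_Icc (by linarith)) (by norm_num)

theorem hasDerivAt (h : IsCapSol g σ ℓ γ P ζ) (hx : x ∈ Ioo (-ℓ) ℓ) :
    HasDerivAt ζ (capD ℓ ζ x) x :=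
  h.1.hasDerivAt_derivWithin two_ne_zero hx

theorem contDiffOn_capFlux (h : IsCapSol g σ ℓ γ P ζ) (hℓ : 0 < ℓ) :
    ContDiffOn ℝ 1 (capFlux σ ℓ ζ) (Icc (-ℓ) ℓ) :=
  contDiffOn_const.mul
    (contDiff_div_sqrt_one_add_sq.comp_contDiffOn (h.contDiffOn_capD hℓ))

theorem hasDerivAt_capFlux (h : IsCapSol g σ ℓ γ P ζ) (hℓ : 0 < ℓ) (hx : x ∈ Ioo (-ℓ) ℓ) :
    HasDerivAt (capFlux σ ℓ ζ) (g * ζ x - P) x := by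
  have hA := contDiff_div_sqrt_one_add_sq.comp_contDiffOn (h.contDiffOn_capD hℓ)
  have hflux : HasDerivAt (capFlux σ ℓ ζ) (σ * meanCurv ℓ ζ x) x :=
    (hA.hasDerivAt_derivWithin one_ne_zero hx).const_mul σ
  exact hflux.congr_deriv (by linarith [h.2.1 x hx])

theorem capFlux_right (h : IsCapSol g σ ℓ γ P ζ) : capFlux σ ℓ ζ ℓ = γ := by
  rw [capFlux, ← mul_div_assoc, h.2.2.1]

theorem capFlux_left (h : IsCapSol g σ ℓ γ P ζ) : capFlux σ ℓ ζ (-ℓ) = -γ := by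
  rw [capFlux, ← mul_div_assoc, h.2.2.2]

theorem capFlux_sub_mul_capD_sub_nonneg (hσ : 0 ≤ σ) (x : ℝ) :
    0 ≤ (capFlux σ ℓ ζ x - capFlux σ ℓ η x) * (capD ℓ ζ x - capD ℓ η x) := by
  simpa only [capFlux, ← mul_sub, mul_assoc] using
    mul_nonneg hσ (strictMono_div_sqrt_one_add_sq.monotone.sub_mul_sub_nonneg _ _)

theorem eqOn (hg : 0 < g) (hσ : 0 < σ) (hℓ : 0 < ℓ) (hζ : IsCapSol g σ ℓ γ P ζ)
    (hη : IsCapSol g σ ℓ γ P η) : EqOn ζ η (Icc (-ℓ) ℓ) := by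
  set H := fun x => g * (ζ x - η x) ^ 2 +
    (capFlux σ ℓ ζ x - capFlux σ ℓ η x) * (capD ℓ ζ x - capD ℓ η x)
  have hH_cont : ContinuousOn H (Icc (-ℓ) ℓ) :=
    (continuousOn_const.mul ((hζ.1.continuousOn.sub hη.1.continuousOn).pow 2)).add
      (((hζ.contDiffOn_capFlux hℓ).continuousOn.sub (hη.contDiffOn_capFlux hℓ).continuousOn).mul
        ((hζ.contDiffOn_capD hℓ).continuousOn.sub (hη.contDiffOn_capD hℓ).continuousOn))
  have hH_nonneg : ∀ x, 0 ≤ H x := fun x =>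
    add_nonneg (by positivity) (capFlux_sub_mul_capD_sub_nonneg hσ.le x)
  set F := fun x => (capFlux σ ℓ ζ x - capFlux σ ℓ η x) * (ζ x - η x)
  have hF_cont : ContinuousOn F (Icc (-ℓ) ℓ) :=
    ((hζ.contDiffOn_capFlux hℓ).continuousOn.sub (hη.contDiffOn_capFlux hℓ).continuousOn).mul
      (hζ.1.continuousOn.sub hη.1.continuousOn)
  have hF_deriv : ∀ x ∈ Ioo (-ℓ) ℓ, HasDerivAt F (H x) x := fun x hx =>
    (((hζ.hasDerivAt_capFlux hℓ hx).sub (hη.hasDerivAt_capFlux hℓ hx)).mul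
      ((hζ.hasDerivAt hx).sub (hη.hasDerivAt hx))).congr_deriv
        (by simp only [H, Pi.sub_apply]; ring)
  have hH_int : ∫ x in (-ℓ)..ℓ, H x = 0 := by
    rw [intervalIntegral.integral_eq_sub_of_hasDerivAt_of_le (by linarith) hF_cont hF_deriv
      (hH_cont.intervalIntegrable_of_Icc (by linarith))]
    simp only [F, hζ.capFlux_right, hη.capFlux_right, hζ.capFlux_left, hη.capFlux_left]
    ring
  intro x hx
  by_contra hne
  have hHx : 0 < H x := add_pos_of_pos_of_nonneg
    (mul_pos hg (pow_two_pos_of_ne_zero (sub_ne_zero.2 hne)))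
    (capFlux_sub_mul_capD_sub_nonneg hσ.le x)
  linarith [intervalIntegral.integral_pos (by linarith) hH_cont (fun y _ => hH_nonneg y)
    ⟨x, hx, hHx⟩]

end IsCapSol

/-- Construction of the zero-pressure equilibrium capillary surface
`χ` via the parametrization `Ξ`. -/
theorem stmt3 (g σ ℓ γ : ℝ) (hg : 0 < g) (hσ : 0 < σ) (hℓ : 0 < ℓ)
    (hγ0 : γ ≠ 0) (hγ : |γ| < σ)
    (C : ℝ) (hC : 1 < C)
    (hCeq : Real.sqrt (σ / (2 * g)) *
      (∫ ψ in (0 : ℝ)..(Real.arcsin (|γ| / σ)),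
        Real.cos ψ / Real.sqrt (C - Real.cos ψ)) = ℓ) :
    let za : ℝ := Real.arcsin (|γ| / σ)
    let Ξ : ℝ → ℝ := fun z =>
      Real.sqrt (σ / (2 * g)) *
        ∫ ψ in (0 : ℝ)..z, Real.cos ψ / Real.sqrt (C - Real.cos ψ)
    let χ : ℝ → ℝ := fun x =>
      Real.sign γ * Real.sqrt (2 * σ / g) *
        Real.sqrt (C - Real.cos (Function.invFunOn Ξ (Set.Icc (-za) za) x))
    (∀ z ∈ Set.Icc (-za) za, Ξ (-z) = -Ξ z) ∧
    StrictMonoOn Ξ (Set.Icc (-za) za) ∧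
    Set.BijOn Ξ (Set.Icc (-za) za) (Set.Icc (-ℓ) ℓ) ∧
    ContDiffOn ℝ ((⊤ : ℕ∞) : WithTop ℕ∞) χ (Set.Icc (-ℓ) ℓ) ∧
    (∀ x ∈ Set.Icc (-ℓ) ℓ, χ (-x) = χ x) ∧
    IsCapSol g σ ℓ γ 0 χ ∧
    (∀ ζ : ℝ → ℝ, IsCapSol g σ ℓ γ 0 ζ → Set.EqOn ζ χ (Set.Icc (-ℓ) ℓ)) := by
  intro za Ξ χ
  set k := √(σ / (2 * g))
  have hk : 0 < k := sqrt_pos.2 (by positivity)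
  have hgk : 2 * g * k ^ 2 = σ := by
    rw [sq_sqrt (by positivity)]
    field_simp
  have hza : za ∈ Ioo 0 (π / 2) :=
    ⟨arcsin_pos.2 (by positivity), arcsin_lt_pi_div_two.2 ((div_lt_one hσ).2 hγ)⟩
  have hℓ' : capAbscissa k C za = ℓ := hCeq
  have hsin : σ * sign γ * sin za = γ := by
    rw [sin_arcsin (by linarith [abs_nonneg γ, div_nonneg (abs_nonneg γ) hσ.le])
      ((div_lt_one hσ).2 hγ).le]
    field_simp
    exact sign_mul_abs γ
  have hχ : χ = capHeight (2 * k * sign γ) C ∘ capAngle k C za := by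
    have h2k : √(2 * σ / g) = 2 * k := by
      rw [show 2 * σ / g = 2 ^ 2 * (σ / (2 * g)) by field_simp, sqrt_mul (by norm_num),
        sqrt_sq (by norm_num)]
    funext x
    simp only [χ, comp_apply, capHeight, capAngle, h2k]
    rw [mul_comm (sign γ)]
    rfl
  have hsol : IsCapSol g σ ℓ γ 0 χ :=
    hχ ▸ isCapSol_capHeight_comp_capAngle hk hC hza hℓ' (sign_sq_of_ne_zero hγ0) hgk hsin
  refine ⟨fun z _ => capAbscissa_neg z,
    (strictMonoOn_capAbscissa hk hC).mono (Icc_subset_Ioo_pi_div_two hza.2),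
    hℓ' ▸ bijOn_capAbscissa hk hC hza, ?_, fun x hx => ?_, hsol,
    fun ζ hζ => hζ.eqOn hg hσ hℓ hsol⟩
  · rw [hχ]
    exact (contDiff_capHeight hC).comp_contDiffOn (contDiffOn_capAngle hk hC hza hℓ')
  · rw [hχ, comp_apply, comp_apply, capAngle_neg hk hC hza hℓ' hx, capHeight_neg]
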